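/- Let ρ_{AC} be a positive definite density matrix on a finite-dimensional bipartite Hilbert space ℋ_A ⊗ ℋ_C, with reduced density matrices ρ_A and ρ_C obtained by partial trace over ℋ_C and ℋ_A respectively. Then for every q > 1, D̂_q(ρ_{AC}‖ρ_A ⊗ ρ_C) ≤ ‖(ρ_A⁻¹ ⊗ ρ_C⁻¹)ρ_{AC} − 1‖, and also D̂(ρ_{AC}‖ρ_A ⊗ ρ_C) ≤ ‖(ρ_A⁻¹ ⊗ ρ_C⁻¹)ρ_{AC} − 1‖, where ‖·‖ is the operator norm. -/

import Mathlib

/-!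
Write `σ = ρ_A ⊗ ρ_C` and `t = ‖σ⁻¹ρ - 1‖`. Every real eigenvalue `μ` of `σ⁻¹ρ` has `|μ - 1| ≤ t`,
since `μ - 1` is an eigenvalue of `σ⁻¹ρ - 1`. Both `X = σ^{-1/2} ρ σ^{-1/2}` and
`Y = ρ^{1/2} σ⁻¹ ρ^{1/2}` are similar to `σ⁻¹ρ`, so their spectra are bounded by `c = 1 + t` as
well. The functional calculus then gives `X^q ≤ c^{q-1} X` and `log Y ≤ log c`; conjugating by
`σ^{1/2}` resp. `ρ^{1/2}` and taking traces (using `Tr ρ = 1`) bounds both divergences by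
`log c = log (1 + t) ≤ t`.
-/

open scoped Kronecker ComplexOrder

namespace QIT

variable {n : Type*} [Fintype n] [DecidableEq n]

/-- Operator norm of a matrix, i.e. the norm of the induced operator on Euclidean space. -/
noncomputable def opNorm (M : Matrix n n ℂ) : ℝ :=
  ‖Matrix.toEuclideanCLM (𝕜 := ℂ) M‖

/-- Functional calculus for Hermitian matrices (junk value `0` on non-Hermitian inputs). -/
noncomputable def matCfc (f : ℝ → ℝ) (M : Matrix n n ℂ) : Matrix n n ℂ :=
  if hM : M.IsHermitian then
    (hM.eigenvectorUnitary : Matrix n n ℂ) *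
      Matrix.diagonal (fun i => (f (hM.eigenvalues i) : ℂ)) *
      star (hM.eigenvectorUnitary : Matrix n n ℂ)
  else 0

/-- Matrix logarithm via the functional calculus. -/
noncomputable def mlog (M : Matrix n n ℂ) : Matrix n n ℂ := matCfc Real.log M

/-- Real powers of a matrix via the functional calculus. -/
noncomputable def mpow (M : Matrix n n ℂ) (q : ℝ) : Matrix n n ℂ :=
  matCfc (fun x => x ^ q) M

/-- Umegaki relative entropy `D(ρ‖σ) = Tr[ρ (log ρ - log σ)]`. -/
noncomputable def relEntropy (ρ σ : Matrix n n ℂ) : ℝ :=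
  (Matrix.trace (ρ * (mlog ρ - mlog σ))).re

/-- Belavkin-Staszewski relative entropy `D̂(ρ‖σ) = Tr[ρ log (ρ^{1/2} σ⁻¹ ρ^{1/2})]`. -/
noncomputable def bsEntropy (ρ σ : Matrix n n ℂ) : ℝ :=
  (Matrix.trace (ρ * mlog (mpow ρ (1/2) * σ⁻¹ * mpow ρ (1/2)))).re

/-- `q`-geometric Rényi divergence
`D̂_q(ρ‖σ) = (q-1)⁻¹ log Tr[σ^{1/2} (σ^{-1/2} ρ σ^{-1/2})^q σ^{1/2}]`. -/
noncomputable def geomRenyi (q : ℝ) (ρ σ : Matrix n n ℂ) : ℝ :=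
  (q - 1)⁻¹ *
    Real.log
      (Matrix.trace
        (mpow σ (1/2) * mpow (mpow σ (-(1/2)) * ρ * mpow σ (-(1/2))) q * mpow σ (1/2))).re

/-- Trace norm `‖M‖₁ = Tr ((M† M)^{1/2})`. -/
noncomputable def traceNorm (M : Matrix n n ℂ) : ℝ :=
  (((Matrix.posSemidef_conjTranspose_mul_self M).1.eigenvectorUnitary : Matrix n n ℂ) *
    Matrix.diagonal (((↑) : ℝ → ℂ) ∘ (Real.sqrt ·) ∘ (Matrix.posSemidef_conjTranspose_mul_self M).1.eigenvalues) *
    (star (Matrix.posSemidef_conjTranspose_mul_self M).1.eigenvectorUnitary : Matrix n n ℂ)).trace.re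

/-- Partial trace over the second tensor factor. -/
noncomputable def ptraceRight {a c : Type*} [Fintype a] [Fintype c]
    (M : Matrix (a × c) (a × c) ℂ) : Matrix a a ℂ :=
  fun i j => ∑ k, M (i, k) (j, k)

/-- Partial trace over the first tensor factor. -/
noncomputable def ptraceLeft {a c : Type*} [Fintype a] [Fintype c]
    (M : Matrix (a × c) (a × c) ℂ) : Matrix c c ℂ :=
  fun i j => ∑ k, M (k, i) (k, j)

end QIT

open scoped MatrixOrder

theorem Matrix.nonempty_of_trace_ne_zero {n R : Type*} [Fintype n] [AddCommMonoid R]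
    {A : Matrix n n R} (hA : A.trace ≠ 0) : Nonempty n := by
  by_contra h
  rw [not_nonempty_iff] at h
  exact hA (by simp [Matrix.trace])

theorem Matrix.IsHermitian.re_trace_conj_le_of_le {n : Type*} [Fintype n]
    {S A B : Matrix n n ℂ} (hS : S.IsHermitian) (h : A ≤ B) :
    (S * A * S).trace.re ≤ (S * B * S).trace.re := by
  have hconj := star_left_conjugate_le_conjugate h S
  rw [Matrix.star_eq_conjTranspose, hS.eq] at hconj
  have := (Complex.le_def.mp (Matrix.le_iff.mp hconj).trace_nonneg).1
  rw [Matrix.trace_sub, Complex.sub_re, Complex.zero_re] at this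
  linarith

theorem Matrix.PosDef.mul_mul_same_of_posDef {n 𝕜 : Type*} [Fintype n] [DecidableEq n]
    [RCLike 𝕜] {A S : Matrix n n 𝕜} (hA : A.PosDef) (hS : S.PosDef) : (S * A * S).PosDef := by
  simpa only [hS.isHermitian.eq] using
    hA.conjTranspose_mul_mul_same (Matrix.mulVec_injective_iff_isUnit.mpr hS.isUnit)

namespace QIT

variable {n : Type*} [Fintype n] [DecidableEq n] {M ρ σ : Matrix n n ℂ}

theorem matCfc_eq_cfc (f : ℝ → ℝ) (M : Matrix n n ℂ) : matCfc f M = cfc f M := by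
  by_cases hM : M.IsHermitian
  · rw [hM.cfc_eq, Matrix.IsHermitian.cfc, matCfc, dif_pos hM]
    simp [Function.comp_def]
  · rw [matCfc, dif_neg hM, cfc_apply_of_not_predicate]
    exact hM

theorem mpow_mul_mpow (hM : M.PosDef) (p r : ℝ) : mpow M p * mpow M r = mpow M (p + r) := by
  simp only [mpow, matCfc_eq_cfc]
  rw [← cfc_mul _ _ M (M.finite_real_spectrum.continuousOn _)
    (M.finite_real_spectrum.continuousOn _)]
  exact cfc_congr fun x hx => (Real.rpow_add (hM.isStrictlyPositive.spectrum_pos hx) p r).symm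

theorem mpow_one (hM : M.IsHermitian) : mpow M 1 = M := by
  simp only [mpow, matCfc_eq_cfc, Real.rpow_one]
  exact cfc_id' ℝ M hM

theorem mpow_zero (hM : M.IsHermitian) : mpow M 0 = 1 := by
  simp only [mpow, matCfc_eq_cfc, Real.rpow_zero]
  exact cfc_const_one ℝ M hM

theorem mpow_half_mul_self (hM : M.PosDef) : mpow M (1 / 2) * mpow M (1 / 2) = M := by
  norm_num [mpow_mul_mpow hM, mpow_one hM.isHermitian]

theorem mpow_posDef (hM : M.PosDef) (p : ℝ) : (mpow M p).PosDef := by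
  rw [mpow, matCfc_eq_cfc, ← Matrix.isStrictlyPositive_iff_posDef]
  exact (cfc_isStrictlyPositive_iff _ _ (M.finite_real_spectrum.continuousOn _)
    hM.isHermitian).mpr fun x hx => Real.rpow_pos_of_pos (hM.isStrictlyPositive.spectrum_pos hx) p

theorem mpow_mul_mpow_neg (hM : M.PosDef) (p : ℝ) : mpow M p * mpow M (-p) = 1 := by
  rw [mpow_mul_mpow hM, add_neg_cancel, mpow_zero hM.isHermitian]

theorem mpow_neg_mul_mpow (hM : M.PosDef) (p : ℝ) : mpow M (-p) * mpow M p = 1 := by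
  rw [mpow_mul_mpow hM, neg_add_cancel, mpow_zero hM.isHermitian]

theorem mpow_neg_one (hM : M.PosDef) : mpow M (-1) = M⁻¹ := by
  refine (Matrix.inv_eq_left_inv ?_).symm
  simpa only [mpow_one hM.isHermitian] using mpow_neg_mul_mpow hM 1

theorem spectrum_mpow_conj (hM : M.PosDef) (p : ℝ) (Z : Matrix n n ℂ) :
    spectrum ℝ (mpow M (-p) * Z * mpow M p) = spectrum ℝ Z :=
  spectrum.units_conjugate' (u := ⟨mpow M p, mpow M (-p), mpow_mul_mpow_neg hM p,
    mpow_neg_mul_mpow hM p⟩)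

theorem spectrum_conj_mpow_neg_half (hσ : σ.PosDef) (ρ : Matrix n n ℂ) :
    spectrum ℝ (mpow σ (-(1 / 2)) * ρ * mpow σ (-(1 / 2))) = spectrum ℝ (σ⁻¹ * ρ) := by
  have hinv : mpow σ (-(1 / 2)) * mpow σ (-(1 / 2)) = σ⁻¹ := by
    norm_num [mpow_mul_mpow hσ, mpow_neg_one hσ]
  rw [← spectrum_mpow_conj hσ (1 / 2), ← hinv]
  simp only [Matrix.mul_assoc, mpow_neg_mul_mpow hσ, Matrix.mul_one]

theorem spectrum_conj_mpow_half (hρ : ρ.PosDef) (σ : Matrix n n ℂ) :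
    spectrum ℝ (mpow ρ (1 / 2) * σ⁻¹ * mpow ρ (1 / 2)) = spectrum ℝ (σ⁻¹ * ρ) := by
  rw [← spectrum_mpow_conj hρ (1 / 2)]
  conv_rhs => rw [← mpow_half_mul_self hρ]
  simp only [← Matrix.mul_assoc, mpow_neg_mul_mpow hρ, Matrix.one_mul]

theorem mpow_le_rpow_smul_of_spectrum_le (hM : M.PosDef) {q c : ℝ} (hq : 1 ≤ q)
    (hc : ∀ x ∈ spectrum ℝ M, x ≤ c) : mpow M q ≤ c ^ (q - 1) • M := by
  rw [mpow, matCfc_eq_cfc, ← cfc_const_mul_id (c ^ (q - 1)) M hM.isHermitian]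
  refine cfc_mono (fun x hx => ?_) (M.finite_real_spectrum.continuousOn _)
    (M.finite_real_spectrum.continuousOn _)
  have hx₀ : 0 < x := hM.isStrictlyPositive.spectrum_pos hx
  calc x ^ q = x ^ (q - 1) * x := by rw [Real.rpow_sub_one hx₀.ne', div_mul_cancel₀ _ hx₀.ne']
    _ ≤ c ^ (q - 1) * x := by gcongr; exact hc x hx

theorem mlog_le_of_spectrum_le (hM : M.PosDef) {c : ℝ} (hc : ∀ x ∈ spectrum ℝ M, x ≤ c) :
    mlog M ≤ Real.log c • (1 : Matrix n n ℂ) := by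
  rw [mlog, matCfc_eq_cfc, ← Algebra.algebraMap_eq_smul_one, ← cfc_const _ M hM.isHermitian]
  exact cfc_mono
    (fun x hx => Real.log_le_log (hM.isStrictlyPositive.spectrum_pos hx) (hc x hx))
    (M.finite_real_spectrum.continuousOn _) (M.finite_real_spectrum.continuousOn _)

theorem le_one_add_opNorm_of_mem_spectrum (M : Matrix n n ℂ) {μ : ℝ} (hμ : μ ∈ spectrum ℝ M) :
    μ ≤ 1 + opNorm (M - 1) := by
  have hμC : (μ : ℂ) - 1 ∈ spectrum ℂ (Matrix.toEuclideanCLM (𝕜 := ℂ) (M - 1)) := by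
    rw [AlgEquiv.spectrum_eq, ← map_one (algebraMap ℂ (Matrix n n ℂ)), ← spectrum.sub_singleton_eq]
    exact Set.sub_mem_sub (spectrum.algebraMap_mem ℂ hμ) rfl
  have hle : ‖(μ : ℂ) - 1‖ ≤ opNorm (M - 1) :=
    (mem_closedBall_zero_iff.mp (spectrum.subset_closedBall_norm_mul _ hμC)).trans
      (mul_le_of_le_one_right (norm_nonneg _) ContinuousLinearMap.norm_id_le)
  have hre : μ - 1 ≤ ‖(μ : ℂ) - 1‖ := by
    rw [← Complex.ofReal_one, ← Complex.ofReal_sub, Complex.norm_real]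
    exact le_abs_self _
  linarith

theorem geomRenyi_le_log_of_spectrum_le (hρ : ρ.PosDef) (hρtr : ρ.trace = 1)
    (hσ : σ.PosDef) {q c : ℝ} (hq : 1 < q) (hc₀ : 0 < c)
    (hc : ∀ μ ∈ spectrum ℝ (σ⁻¹ * ρ), μ ≤ c) : geomRenyi q ρ σ ≤ Real.log c := by
  have : Nonempty n := Matrix.nonempty_of_trace_ne_zero (hρtr ▸ one_ne_zero)
  set S := mpow σ (1 / 2)
  set X := mpow σ (-(1 / 2)) * ρ * mpow σ (-(1 / 2))
  have hS : S.PosDef := mpow_posDef hσ _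
  have hX : X.PosDef := hρ.mul_mul_same_of_posDef (mpow_posDef hσ _)
  have hSXS : S * X * S = ρ := by
    have h₁ : S * mpow σ (-(1 / 2)) = 1 := mpow_mul_mpow_neg hσ _
    have h₂ : mpow σ (-(1 / 2)) * S = 1 := mpow_neg_mul_mpow hσ _
    simp only [X, ← Matrix.mul_assoc, h₁, Matrix.one_mul]
    rw [Matrix.mul_assoc, h₂, Matrix.mul_one]
  have hT : (S * mpow X q * S).trace.re ≤ c ^ (q - 1) := by
    calc (S * mpow X q * S).trace.re ≤ (S * (c ^ (q - 1) • X) * S).trace.re :=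
          hS.isHermitian.re_trace_conj_le_of_le <| mpow_le_rpow_smul_of_spectrum_le hX hq.le
            (spectrum_conj_mpow_neg_half hσ ρ ▸ hc)
      _ = c ^ (q - 1) := by
          rw [Matrix.mul_smul, Matrix.smul_mul, hSXS, Matrix.trace_smul, hρtr]
          simp
  have hTpos : 0 < (S * mpow X q * S).trace.re :=
    (Complex.lt_def.mp ((mpow_posDef hX q).mul_mul_same_of_posDef hS).trace_pos).1
  have hq₁ : 0 < q - 1 := sub_pos.mpr hq
  calc geomRenyi q ρ σ ≤ (q - 1)⁻¹ * Real.log (c ^ (q - 1)) := by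
        unfold geomRenyi
        gcongr
    _ = Real.log c := by
        rw [Real.log_rpow hc₀]
        field_simp

theorem bsEntropy_le_log_of_spectrum_le (hρ : ρ.PosDef) (hρtr : ρ.trace = 1)
    (hσ : σ.PosDef) {c : ℝ} (hc : ∀ μ ∈ spectrum ℝ (σ⁻¹ * ρ), μ ≤ c) :
    bsEntropy ρ σ ≤ Real.log c := by
  set R := mpow ρ (1 / 2)
  set Y := R * σ⁻¹ * R
  have hR : R.PosDef := mpow_posDef hρ _
  have hRR : R * R = ρ := mpow_half_mul_self hρ
  have hY : Y.PosDef := hσ.inv.mul_mul_same_of_posDef hR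
  have hlog : mlog Y ≤ Real.log c • (1 : Matrix n n ℂ) :=
    mlog_le_of_spectrum_le hY (spectrum_conj_mpow_half hρ σ ▸ hc)
  calc bsEntropy ρ σ = (R * R * mlog Y).trace.re := by rw [hRR]; rfl
    _ = (R * mlog Y * R).trace.re := by rw [Matrix.mul_assoc, Matrix.trace_mul_comm R]
    _ ≤ (R * (Real.log c • 1) * R).trace.re := hR.isHermitian.re_trace_conj_le_of_le hlog
    _ = Real.log c := by
        rw [Matrix.mul_smul, Matrix.smul_mul, Matrix.mul_one, hRR, Matrix.trace_smul, hρtr]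
        simp

theorem ptraceRight_posDef {a c : Type*} [Fintype a] [Fintype c] [Nonempty c]
    {M : Matrix (a × c) (a × c) ℂ} (hM : M.PosDef) : (ptraceRight M).PosDef := by
  have hsum : ptraceRight M = ∑ k, M.submatrix (·, k) (·, k) := by
    ext i j
    simp [ptraceRight, Matrix.sum_apply]
  rw [hsum]
  exact Matrix.posDef_sum Finset.univ_nonempty fun k _ =>
    hM.submatrix fun _ _ h => (Prod.ext_iff.mp h).1

theorem ptraceLeft_posDef {a c : Type*} [Fintype a] [Fintype c] [Nonempty a]
    {M : Matrix (a × c) (a × c) ℂ} (hM : M.PosDef) : (ptraceLeft M).PosDef := by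
  have hsum : ptraceLeft M = ∑ k, M.submatrix (k, ·) (k, ·) := by
    ext i j
    simp [ptraceLeft, Matrix.sum_apply]
  rw [hsum]
  exact Matrix.posDef_sum Finset.univ_nonempty fun k _ =>
    hM.submatrix fun _ _ h => (Prod.ext_iff.mp h).2

/-- For a positive definite bipartite density matrix `ρ_{AC}` with marginals
`ρ_A`, `ρ_C`, for every `q > 1` both the `q`-geometric Rényi mutual information and the
BS-mutual information are bounded by `‖(ρ_A⁻¹ ⊗ ρ_C⁻¹) ρ_{AC} - 1‖`. -/
theorem bsMutualInfo_le_opNorm {a c : Type*} [Fintype a] [DecidableEq a]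
    [Fintype c] [DecidableEq c]
    (ρAC : Matrix (a × c) (a × c) ℂ) (hρ : ρAC.PosDef) (hρtr : ρAC.trace = 1) :
    (∀ q : ℝ, 1 < q →
        geomRenyi q ρAC (ptraceRight ρAC ⊗ₖ ptraceLeft ρAC) ≤
          opNorm ((ptraceRight ρAC)⁻¹ ⊗ₖ (ptraceLeft ρAC)⁻¹ * ρAC - 1)) ∧
      bsEntropy ρAC (ptraceRight ρAC ⊗ₖ ptraceLeft ρAC) ≤
        opNorm ((ptraceRight ρAC)⁻¹ ⊗ₖ (ptraceLeft ρAC)⁻¹ * ρAC - 1) := by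
  have hne : Nonempty (a × c) := Matrix.nonempty_of_trace_ne_zero (hρtr ▸ one_ne_zero)
  have : Nonempty a := hne.map Prod.fst
  have : Nonempty c := hne.map Prod.snd
  rw [← Matrix.inv_kronecker]
  set σ := ptraceRight ρAC ⊗ₖ ptraceLeft ρAC
  set t := opNorm (σ⁻¹ * ρAC - 1)
  have hσ : σ.PosDef := (ptraceRight_posDef hρ).kronecker (ptraceLeft_posDef hρ)
  have hspec : ∀ μ ∈ spectrum ℝ (σ⁻¹ * ρAC), μ ≤ 1 + t := fun μ hμ =>
    le_one_add_opNorm_of_mem_spectrum _ hμ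
  have ht : 0 ≤ t := norm_nonneg _
  have hlog : Real.log (1 + t) ≤ t := by
    simpa using Real.log_le_sub_one_of_pos (by linarith : 0 < 1 + t)
  exact ⟨fun q hq => (geomRenyi_le_log_of_spectrum_le hρ hρtr hσ hq (by linarith) hspec).trans hlog,
    (bsEntropy_le_log_of_spectrum_le hρ hρtr hσ hspec).trans hlog⟩

end QIT
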